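/- arXiv:2512.02042 — 3 statements merged into one kernel-verified Lean document; each statement's English description precedes it below -/
import Mathlib

section
/- Let m ≥ 1, c ∈ ℂ^m, and let g : ℂ^m → ℂ be an entire function that depends only on the differences, i.e., g(z) = G(z₂-z₁, z₃-z₂, …, z_m-z_{m-1}) for some entire G : ℂ^{m-1} → ℂ, and suppose g(z+c) - g(z) = (c₁+⋯+c_m)/(2m) for all z. Then f(z) = 1 - (-(z₁+⋯+z_m)/(2m) + g(z))² satisfies (∑_{j=1}^m ∂f/∂z_j(z))² + f(z+c) = 1 for all z ∈ ℂ^m. -/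
/-! With `h z = -(∑ j, z j) / (2m) + g z` we have `f = 1 - h²`. The hypothesis on `g (z + c)` makes
`h` `c`-periodic, so `f (z + c) = 1 - (h z)²`. Since `g` only sees differences of coordinates, it is
constant along the diagonal, so `h (z + t • 1) = h z - t / 2`; the sum of the partial derivatives of
`f` is its derivative in the direction `1`, which is therefore `h z`. -/

open Complex

theorem sum_fderiv_single_eq_lineDeriv {𝕜 ι F : Type*} [NontriviallyNormedField 𝕜] [Fintype ι]
    [DecidableEq ι] [NormedAddCommGroup F] [NormedSpace 𝕜 F] {f : (ι → 𝕜) → F} {x : ι → 𝕜}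
    (hf : DifferentiableAt 𝕜 f x) :
    ∑ j, fderiv 𝕜 f x (Pi.single j 1) = lineDeriv 𝕜 f x 1 := by
  rw [← map_sum, hf.lineDeriv_eq_fderiv]
  congr 1
  ext i
  simp

theorem hasLineDerivAt_one_sub_sq_of_affine {𝕜 E : Type*} [NontriviallyNormedField 𝕜]
    [AddCommGroup E] [Module 𝕜 E] {φ : E → 𝕜} {x v : E} {a : 𝕜}
    (hφ : ∀ t : 𝕜, φ (x + t • v) = φ x + t * a) :
    HasLineDerivAt 𝕜 (fun w => 1 - φ w ^ 2) (-(2 * φ x * a)) x v := by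
  have hline : HasDerivAt (fun t : 𝕜 => φ x + t * a) a 0 := by
    simpa using ((hasDerivAt_id (0 : 𝕜)).mul_const a).const_add (φ x)
  unfold HasLineDerivAt
  simp only [hφ]
  convert (hline.pow 2).const_sub 1 using 1 <;> simp

theorem stmt4
    (m : ℕ) (hm : 1 ≤ m) (c : Fin m → ℂ)
    (g : (Fin m → ℂ) → ℂ) (hg : Differentiable ℂ g)
    (G : (Fin (m - 1) → ℂ) → ℂ)
    (hgG : ∀ z : Fin m → ℂ,
      g z = G (fun i : Fin (m - 1) =>
        z ⟨i.val + 1, by have := i.isLt; omega⟩ - z ⟨i.val, by have := i.isLt; omega⟩))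
    (hgc : ∀ z : Fin m → ℂ, g (z + c) - g z = (∑ j, c j) / (2 * m))
    (f : (Fin m → ℂ) → ℂ)
    (hf : ∀ z : Fin m → ℂ, f z = 1 - (-(∑ j, z j) / (2 * m) + g z) ^ 2) :
    ∀ z : Fin m → ℂ,
      (∑ j : Fin m, fderiv ℂ f z (Pi.single j 1)) ^ 2 + f (z + c) = 1 := by
  intro z
  have hm0 : (m : ℂ) ≠ 0 := Nat.cast_ne_zero.mpr (by omega)
  set h : (Fin m → ℂ) → ℂ := fun w => -(∑ j, w j) / (2 * m) + g w with h_def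
  have hfh : f = fun w => 1 - h w ^ 2 := funext hf
  have hg_diag : ∀ (w : Fin m → ℂ) (t : ℂ), g (w + t • 1) = g w := by
    intro w t
    rw [hgG, hgG]
    congr 1
    funext i
    simp only [Pi.add_apply, Pi.smul_apply, Pi.one_apply]
    ring
  have hh_diag : ∀ t : ℂ, h (z + t • 1) = h z + t * (-1 / 2) := by
    intro t
    simp only [h_def, hg_diag, Pi.add_apply, Pi.smul_apply, Pi.one_apply, smul_eq_mul, mul_one,
      Finset.sum_add_distrib, Finset.sum_const, Finset.card_univ, Fintype.card_fin, nsmul_eq_mul]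
    field_simp
    ring
  have hh_period : h (z + c) = h z := by
    simp only [h_def, Pi.add_apply, Finset.sum_add_distrib]
    linear_combination hgc z
  have hsum : ∑ j, fderiv ℂ f z (Pi.single j 1) = h z := by
    have hdiff : DifferentiableAt ℂ f z := by
      rw [hfh, h_def]
      fun_prop
    rw [sum_fderiv_single_eq_lineDeriv hdiff, hfh,
      (hasLineDerivAt_one_sub_sq_of_affine hh_diag).lineDeriv]
    ring
  rw [hsum, hfh]
  simp only [hh_period]
  ring
end

section
/- Let P : ℂ^m → ℂ be an entire function such that ∑_{j=1}^m (∂P/∂z_j(z) + d_j) = 1 for all z, where d₁,…,d_m ∈ ℂ. Then f(z) = sin(d₁z₁+⋯+d_mz_m + P(z)) satisfies (∑_{j=1}^m ∂f/∂z_j(z))² + f(z)² = 1 for all z ∈ ℂ^m. -/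
/-!
Summing the partial derivatives is differentiating along `(1, …, 1)`. The hypothesis says the phase
`g z = d · z + P z` has derivative `1` in that direction, so by the chain rule `∑ ∂f/∂z_j = cos g`,
and the identity is `cos² g + sin² g = 1`.
-/

open Complex

theorem ContinuousLinearMap.sum_apply_pi_single_one {ι R M : Type*} [Fintype ι] [DecidableEq ι]
    [Semiring R] [TopologicalSpace R] [AddCommMonoid M] [TopologicalSpace M] [Module R M]
    (L : (ι → R) →L[R] M) : ∑ j, L (Pi.single j 1) = L 1 := by
  rw [← map_sum, ← Finset.univ_sum_single (1 : ι → R)]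
  rfl

theorem fderiv_sum_mul_apply_one {ι : Type*} [Fintype ι] (d : ι → ℂ) (z : ι → ℂ) :
    fderiv ℂ (fun w : ι → ℂ => ∑ j, d j * w j) z 1 = ∑ j, d j := by
  have h : HasFDerivAt (fun w : ι → ℂ => ∑ j, d j * w j)
      (∑ j, d j • ContinuousLinearMap.proj j : (ι → ℂ) →L[ℂ] ℂ) z :=
    (∑ j, d j • ContinuousLinearMap.proj j : (ι → ℂ) →L[ℂ] ℂ).hasFDerivAt.congr_of_eventuallyEq
      (Filter.Eventually.of_forall fun w => by simp)
  simp [h.fderiv]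

theorem sq_fderiv_csin_add_sq_sin_eq_one {E : Type*} [NormedAddCommGroup E] [NormedSpace ℂ E]
    {g : E → ℂ} {z v : E} (hg : DifferentiableAt ℂ g z) (hv : fderiv ℂ g z v = 1) :
    fderiv ℂ (fun w => sin (g w)) z v ^ 2 + sin (g z) ^ 2 = 1 := by
  rw [fderiv_csin hg, smul_apply, hv, smul_eq_mul, mul_one, cos_sq_add_sin_sq]

theorem stmt15
    (m : ℕ) (d : Fin m → ℂ)
    (P : (Fin m → ℂ) → ℂ) (hP : Differentiable ℂ P)
    (hcond : ∀ z : Fin m → ℂ,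
      (∑ j : Fin m, (fderiv ℂ P z (Pi.single j 1) + d j)) = 1)
    (f : (Fin m → ℂ) → ℂ)
    (hf : ∀ z : Fin m → ℂ, f z = Complex.sin ((∑ j, d j * z j) + P z)) :
    ∀ z : Fin m → ℂ,
      (∑ j : Fin m, fderiv ℂ f z (Pi.single j 1)) ^ 2 + (f z) ^ 2 = 1 := by
  intro z
  have hlin : DifferentiableAt ℂ (fun w : Fin m → ℂ => ∑ j, d j * w j) z := by fun_prop
  have hphase : fderiv ℂ (fun w => (∑ j, d j * w j) + P w) z 1 = 1 := by
    rw [fderiv_fun_add hlin (hP z), add_apply, fderiv_sum_mul_apply_one,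
      ← (fderiv ℂ P z).sum_apply_pi_single_one, add_comm, ← Finset.sum_add_distrib]
    exact hcond z
  rw [show f = fun w => sin ((∑ j, d j * w j) + P w) from funext hf,
    ContinuousLinearMap.sum_apply_pi_single_one]
  exact sq_fderiv_csin_add_sq_sin_eq_one (hlin.add (hP z)) hphase
end

section
/- There is no pair of non-constant polynomial functions f, g : ℂ → ℂ with f(z)ⁿ + g(z)ⁿ = 1 for all z ∈ ℂ, when n ≥ 3. -/
open Polynomial

theorem isCoprime_of_pow_add_pow_eq_one {R : Type*} [CommSemiring R] {a b : R} {n : ℕ}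
    (hn : n ≠ 0) (h : a ^ n + b ^ n = 1) : IsCoprime a b :=
  (IsCoprime.pow_iff (Nat.pos_of_ne_zero hn) (Nat.pos_of_ne_zero hn)).mp ⟨1, 1, by simpa using h⟩

theorem Polynomial.natDegree_eq_zero_of_pow_add_pow_eq_one {k : Type*} [Field k] {n : ℕ}
    (hn : 3 ≤ n) (chn : (n : k) ≠ 0) {p q : k[X]} (hp : p ≠ 0) (hq : q ≠ 0)
    (h : p ^ n + q ^ n = 1) : p.natDegree = 0 ∧ q.natDegree = 0 := by
  have hpq : IsCoprime p q := isCoprime_of_pow_add_pow_eq_one (by omega) h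
  obtain ⟨hp0, hq0, -⟩ := Polynomial.flt hn chn hp hq one_ne_zero hpq (by rw [one_pow, h])
  exact ⟨hp0, hq0⟩

theorem stmt18 (n : ℕ) (hn : 3 ≤ n) :
    ¬ ∃ p q : Polynomial ℂ, 0 < p.natDegree ∧ 0 < q.natDegree ∧
      ∀ z : ℂ, (p.eval z) ^ n + (q.eval z) ^ n = 1 := by
  rintro ⟨p, q, hp, hq, h⟩
  have heq : p ^ n + q ^ n = 1 := Polynomial.funext fun z => by simpa using h z
  have hn0 : (n : ℂ) ≠ 0 := Nat.cast_ne_zero.mpr (by omega)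
  exact hp.ne' (natDegree_eq_zero_of_pow_add_pow_eq_one hn hn0 (ne_zero_of_natDegree_gt hp)
    (ne_zero_of_natDegree_gt hq) heq).1
end
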